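/- arXiv:1403.1757 — 2 statements merged into one kernel-verified Lean document; each statement's English description precedes it below -/
import Mathlib

section
/- Consider a function G: ℕ → ℝ such that lim_{k→∞} G(k)/k = 0 and G(n) ≥ 0 for all but finitely many n. Then 2G(n) − G(2n) ≥ 0 holds for infinitely many n. -/
open Filter

/-!
If `2 G(n) < G(2n)` for all large `n`, then along a doubling orbit `m, 2m, 4m, …` the ratio
`G(k)/k` strictly increases. Starting at a point `m` with `G(m) ≥ 0`, the ratio at `2m` is then
positive and bounds all later ratios from below, contradicting `G(k)/k → 0`.
-/

theorem div_lt_div_two_mul_of_two_mul_lt {G : ℕ → ℝ} {n : ℕ} (hn : 0 < n)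
    (h : 2 * G n < G (2 * n)) : G n / n < G (2 * n) / ↑(2 * n) := by
  have hn' : (0 : ℝ) < n := by exact_mod_cast hn
  rw [Nat.cast_mul, Nat.cast_ofNat, div_lt_div_iff₀ hn' (by positivity)]
  nlinarith

theorem strictMono_two_pow_mul {m : ℕ} (hm : 0 < m) : StrictMono fun k : ℕ => 2 ^ k * m :=
  strictMono_nat_of_lt_succ fun k => by rw [pow_succ]; nlinarith [Nat.one_le_two_pow (n := k)]

theorem strictMono_div_two_pow_mul {G : ℕ → ℝ} {N m : ℕ}
    (hG : ∀ n ≥ N, 2 * G n < G (2 * n)) (hNm : N ≤ m) (hm : 0 < m) :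
    StrictMono fun k : ℕ => G (2 ^ k * m) / ↑(2 ^ k * m) :=
  strictMono_nat_of_lt_succ fun k => by
    have hk : m ≤ 2 ^ k * m := Nat.le_mul_of_pos_left m (Nat.two_pow_pos k)
    rw [pow_succ, mul_comm _ 2, mul_assoc]
    exact div_lt_div_two_mul_of_two_mul_lt (by omega) (hG _ (by omega))

theorem not_tendsto_div_of_forall_ge_two_mul_lt {G : ℕ → ℝ} {N m : ℕ}
    (hG : ∀ n ≥ N, 2 * G n < G (2 * n)) (hNm : N ≤ m) (hm : 0 < m) (hGm : 0 ≤ G m) :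
    ¬Tendsto (fun k : ℕ => G k / k) atTop (nhds 0) := by
  intro hlim
  set u : ℕ → ℝ := fun k => G (2 ^ k * m) / ↑(2 ^ k * m)
  have hmono : StrictMono u := strictMono_div_two_pow_mul hG hNm hm
  have hu_le : u 1 ≤ 0 :=
    hmono.monotone.ge_of_tendsto (hlim.comp (strictMono_two_pow_mul hm).tendsto_atTop) 1
  have hu_nonneg : 0 ≤ u 0 := by simpa [u] using div_nonneg hGm m.cast_nonneg
  linarith [hmono zero_lt_one]

/-- If `G : ℕ → ℝ` satisfies `lim_k G(k)/k = 0` and `G(n) ≥ 0` for all but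
finitely many `n`, then `2 G(n) - G(2n) ≥ 0` for infinitely many `n`. -/
theorem excess_bounding (G : ℕ → ℝ)
    (hlim : Tendsto (fun k : ℕ => G k / k) atTop (nhds 0))
    (hpos : ∀ᶠ n in atTop, 0 ≤ G n) :
    ∃ᶠ n in atTop, 0 ≤ 2 * G n - G (2 * n) := by
  by_contra hcon
  obtain ⟨N, hN⟩ := eventually_atTop.1 ((not_frequently.1 hcon).and hpos)
  exact not_tendsto_div_of_forall_ge_two_mul_lt (fun n hn => by linarith [(hN n hn).1])
    (Nat.le_succ N) N.succ_pos (hN (N + 1) (Nat.le_succ N)).2 hlim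
end

section
/- Let P be a code over a stationary measure Q such that I^P is nearly nondecreasing. Then the Hilberg exponents can be computed along dyadic block lengths: γ⁺_P = limsup_{k→∞} log⁺(I^P(2^k))/log 2^k, γ⁻_P = liminf_{k→∞} log⁺(I^P(2^k))/log 2^k, δ⁺_P = limsup_{k→∞} log⁺(E_Q I^P(2^k))/log 2^k, and δ⁻_P = liminf_{k→∞} log⁺(E_Q I^P(2^k))/log 2^k. -/
/-!
Near-monotonicity bounds the variation of `I^P(n)` over a dyadic block `2^k ≤ n ≤ 2^(k+1)` by
`4 k + C`, while `log n` varies there by at most `1`. Hence `log⁺ I^P(n) / log n` lies, up to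
a factor `1 + 1/k` and an additive `O(log k / k)`, between its values at the two ends of the
block, so an eventual upper (lower) bound of the dyadic subsequence is, up to any `ε > 0`, an
eventual bound of the whole sequence; since `limsup` and `liminf` on `ℝ` are the infimum and
supremum of such bounds, they agree, junk values included. The expectations behave the same
way: squeezing `I^P(n)` between `I^P(n₀)` and `I^P(M)` shows that integrability of `I^P(n)` is
either eventually true or eventually false, and in the second case both sequences of
integrals are eventually `0`.
-/

open MeasureTheory ProbabilityTheory Filter

noncomputable section

/-- The binary positive logarithm `log⁺ x`: `log(x+1)` for `x ≥ 0` and `0` for `x < 0`. -/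
def logPlus (x : ℝ) : ℝ := if 0 ≤ x then Real.logb 2 (x + 1) else 0

variable {𝕏 : Type*}

/-- The left shift on two-sided sequences. -/
def shift (ω : ℤ → 𝕏) : ℤ → 𝕏 := fun i => ω (i + 1)

/-- The block `X_{-n+1}^0` of a two-sided sequence. -/
def blockNeg (n : ℕ) (ω : ℤ → 𝕏) : Fin n → 𝕏 := fun i => ω (-(n : ℤ) + 1 + (i : ℕ))

/-- The block `X_1^n` of a two-sided sequence. -/
def blockPos (n : ℕ) (ω : ℤ → 𝕏) : Fin n → 𝕏 := fun i => ω (1 + (i : ℕ))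

/-- The block `X_{-n+1}^n` of a two-sided sequence. -/
def blockBoth (n : ℕ) (ω : ℤ → 𝕏) : Fin (2 * n) → 𝕏 := fun i => ω (-(n : ℤ) + 1 + (i : ℕ))

/-- A code assigns nonnegative values to finite strings. -/
def CodeNonneg (P : (n : ℕ) → (Fin n → 𝕏) → ℝ) : Prop := ∀ n x, 0 ≤ P n x

/-- A code satisfies the Kraft inequality `∑_{x_1^n} P(x_1^n) ≤ 1`. -/
def CodeKraft (P : (n : ℕ) → (Fin n → 𝕏) → ℝ) : Prop :=
  ∀ n, 1 ≤ n → ∑' x : Fin n → 𝕏, P n x ≤ 1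

/-- The pointwise mutual information
`I^P(n) = -log P(X_{-n+1}^0) - log P(X_1^n) + log P(X_{-n+1}^n)` (binary logarithm). -/
def pmi (P : (n : ℕ) → (Fin n → 𝕏) → ℝ) (n : ℕ) (ω : ℤ → 𝕏) : ℝ :=
  -Real.logb 2 (P n (blockNeg n ω)) - Real.logb 2 (P n (blockPos n ω))
    + Real.logb 2 (P (2 * n) (blockBoth n ω))

/-- The upper random Hilberg exponent `γ⁺_P = limsup_n log⁺ I^P(n) / log n`. -/
def gammaPlus (P : (n : ℕ) → (Fin n → 𝕏) → ℝ) (ω : ℤ → 𝕏) : ℝ :=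
  limsup (fun n : ℕ => logPlus (pmi P n ω) / Real.logb 2 n) atTop

/-- The lower random Hilberg exponent `γ⁻_P = liminf_n log⁺ I^P(n) / log n`. -/
def gammaMinus (P : (n : ℕ) → (Fin n → 𝕏) → ℝ) (ω : ℤ → 𝕏) : ℝ :=
  liminf (fun n : ℕ => logPlus (pmi P n ω) / Real.logb 2 n) atTop

variable [MeasurableSpace 𝕏]

/-- The upper expected Hilberg exponent `δ⁺_P = limsup_n log⁺ E_Q I^P(n) / log n`. -/
def deltaPlus (Q : Measure (ℤ → 𝕏)) (P : (n : ℕ) → (Fin n → 𝕏) → ℝ) : ℝ :=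
  limsup (fun n : ℕ => logPlus (∫ ω, pmi P n ω ∂Q) / Real.logb 2 n) atTop

/-- The lower expected Hilberg exponent `δ⁻_P = liminf_n log⁺ E_Q I^P(n) / log n`. -/
def deltaMinus (Q : Measure (ℤ → 𝕏)) (P : (n : ℕ) → (Fin n → 𝕏) → ℝ) : ℝ :=
  liminf (fun n : ℕ => logPlus (∫ ω, pmi P n ω ∂Q) / Real.logb 2 n) atTop

/-- The measure `Q` regarded as a code: `Q(x_1^n) = Q(X_1^n = x_1^n)`. -/
def measureCode (Q : Measure (ℤ → 𝕏)) : (n : ℕ) → (Fin n → 𝕏) → ℝ :=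
  fun n x => (Q {ω | blockPos n ω = x}).toReal

/-- The upper inverse expected Hilberg exponent
`ζ⁺_P = limsup_n log⁺ [E_Q (I^P(n)+B)⁻¹]⁻¹ / log n`, for a constant `B`. -/
def zetaPlus (Q : Measure (ℤ → 𝕏)) (P : (n : ℕ) → (Fin n → 𝕏) → ℝ) (B : ℝ) : ℝ :=
  limsup (fun n : ℕ => logPlus ((∫ ω, (pmi P n ω + B)⁻¹ ∂Q)⁻¹) / Real.logb 2 n) atTop

/-- The lower inverse expected Hilberg exponent
`ζ⁻_P = liminf_n log⁺ [E_Q (I^P(n)+B)⁻¹]⁻¹ / log n`, for a constant `B`. -/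
def zetaMinus (Q : Measure (ℤ → 𝕏)) (P : (n : ℕ) → (Fin n → 𝕏) → ℝ) (B : ℝ) : ℝ :=
  liminf (fun n : ℕ => logPlus ((∫ ω, (pmi P n ω + B)⁻¹ ∂Q)⁻¹) / Real.logb 2 n) atTop

/-- The parameter `ε_P = limsup_n log⁺ [Var_Q I^P(n) / E_Q I^P(n)] / log n`. -/
def epsilonExp (Q : Measure (ℤ → 𝕏)) (P : (n : ℕ) → (Fin n → 𝕏) → ℝ) : ℝ :=
  limsup (fun n : ℕ =>
    logPlus (variance (pmi P n) Q / ∫ ω, pmi P n ω ∂Q) / Real.logb 2 n) atTop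

/-- `I^P` is nearly nondecreasing: for some `C ≥ 0`,
`I^P(n+m) ≥ I^P(n) - 4 log m - C` pointwise for all `n, m ≥ 1`. -/
def NearlyNondecreasing (P : (n : ℕ) → (Fin n → 𝕏) → ℝ) : Prop :=
  ∃ C : ℝ, 0 ≤ C ∧ ∀ n m : ℕ, 1 ≤ n → 1 ≤ m → ∀ ω : ℤ → 𝕏,
    pmi P n ω - 4 * Real.logb 2 m - C ≤ pmi P (n + m) ω

open Topology

lemma logPlus_nonneg (x : ℝ) : 0 ≤ logPlus x := by
  unfold logPlus
  split_ifs with hx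
  · exact Real.logb_nonneg one_lt_two (by linarith)
  · rfl

lemma logPlus_mono : Monotone logPlus := by
  intro x y hxy
  unfold logPlus
  split_ifs with hx hy hy
  · exact Real.logb_le_logb_of_le one_lt_two (by linarith) (by linarith)
  · exact absurd (hx.trans hxy) hy
  · exact Real.logb_nonneg one_lt_two (by linarith)
  · rfl

lemma logPlus_add_le (x y : ℝ) : logPlus (x + y) ≤ logPlus x + logPlus y := by
  rcases lt_or_ge y 0 with hy | hy
  · simpa [logPlus, hy.not_ge] using logPlus_mono (by linarith : x + y ≤ x)
  rcases lt_or_ge x 0 with hx | hx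
  · simpa [logPlus, hx.not_ge] using logPlus_mono (by linarith : x + y ≤ y)
  simp only [logPlus, if_pos hx, if_pos hy, if_pos (add_nonneg hx hy)]
  rw [← Real.logb_mul (by positivity) (by positivity)]
  exact Real.logb_le_logb_of_le one_lt_two (by positivity) (by nlinarith)

lemma tendsto_logPlus_mul_add_div_atTop {A : ℝ} (hA : 0 < A) (C : ℝ) :
    Tendsto (fun k : ℕ => logPlus (A * k + C) / k) atTop (𝓝 0) := by
  have hlin : Tendsto (fun k : ℕ => A * k + C + 1) atTop atTop :=
    tendsto_atTop_add_const_right _ _ <| tendsto_atTop_add_const_right _ _ <|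
      tendsto_natCast_atTop_atTop.const_mul_atTop hA
  have hlog := ((Real.tendsto_pow_log_div_mul_add_atTop A⁻¹ (-(C + 1) / A) 1
    (inv_ne_zero hA.ne')).comp hlin).div_const (Real.log 2)
  rw [zero_div] at hlog
  refine hlog.congr' ?_
  filter_upwards [hlin.eventually_ge_atTop 1] with k hk
  have hnonneg : 0 ≤ A * k + C := by linarith
  have hden : A⁻¹ * (A * k + C + 1) + -(C + 1) / A = k := by field_simp; ring
  simp only [Function.comp_apply, pow_one, hden, logPlus, if_pos hnonneg, Real.logb]
  ring

lemma Real.sInf_eq_of_subset_of_forall_add_mem {S T : Set ℝ} (hST : S ⊆ T)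
    (hTS : ∀ x ∈ T, ∀ ε > 0, x + ε ∈ S) : sInf S = sInf T := by
  by_cases hT : BddBelow T
  · rcases T.eq_empty_or_nonempty with rfl | hTne
    · rw [Set.subset_empty_iff.1 hST]
    have hSne : S.Nonempty := let ⟨x, hx⟩ := hTne; ⟨x + 1, hTS x hx 1 one_pos⟩
    refine le_antisymm (le_of_forall_pos_le_add fun ε hε => ?_) (csInf_le_csInf hT hSne hST)
    obtain ⟨x, hxT, hx⟩ := Real.lt_sInf_add_pos hTne (half_pos hε)
    have := csInf_le (hT.mono hST) (hTS x hxT _ (half_pos hε))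
    linarith
  · -- both infima are then the junk value `0`
    have hS : ¬BddBelow S := fun ⟨b, hb⟩ =>
      hT ⟨b - 1, fun x hx => by linarith [hb (hTS x hx 1 one_pos)]⟩
    rw [Real.sInf_of_not_bddBelow hT, Real.sInf_of_not_bddBelow hS]

lemma Real.sSup_eq_of_subset_of_forall_sub_mem {S T : Set ℝ} (hST : S ⊆ T)
    (hTS : ∀ x ∈ T, ∀ ε > 0, x - ε ∈ S) : sSup S = sSup T := by
  have := Real.sInf_eq_of_subset_of_forall_add_mem (S := -S) (T := -T)
    (Set.neg_subset_neg.2 hST) fun x hx ε hε => by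
      rw [Set.mem_neg, neg_add']
      exact hTS _ hx ε hε
  rwa [Real.sInf_neg, Real.sInf_neg, neg_inj] at this

section Transfer

variable {α β : Type*} {f : Filter α} {g : Filter β} {u : α → ℝ} {v : β → ℝ}

lemma limsup_eq_limsup_of_forall_eventually_le
    (huv : ∀ x, (∀ᶠ a in f, u a ≤ x) → ∀ᶠ b in g, v b ≤ x)
    (hvu : ∀ x, (∀ᶠ b in g, v b ≤ x) → ∀ ε > 0, ∀ᶠ a in f, u a ≤ x + ε) :
    limsup u f = limsup v g := by
  rw [limsup_eq, limsup_eq]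
  exact Real.sInf_eq_of_subset_of_forall_add_mem huv hvu

lemma liminf_eq_liminf_of_forall_eventually_ge
    (huv : ∀ x, (∀ᶠ a in f, x ≤ u a) → ∀ᶠ b in g, x ≤ v b)
    (hvu : ∀ x, (∀ᶠ b in g, x ≤ v b) → ∀ ε > 0, ∀ᶠ a in f, x - ε ≤ u a) :
    liminf u f = liminf v g := by
  rw [liminf_eq, liminf_eq]
  exact Real.sSup_eq_of_subset_of_forall_sub_mem huv hvu

end Transfer

lemma natCast_le_logb_two_of_two_pow_le {k n : ℕ} (h : 2 ^ k ≤ n) : (k : ℝ) ≤ Real.logb 2 n :=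
  (Nat.cast_le.2 (Nat.le_log_of_pow_le one_lt_two h)).trans (Real.natLog_le_logb n 2)

lemma logb_two_le_natCast_of_le_two_pow {k n : ℕ} (h : n ≤ 2 ^ k) : Real.logb 2 n ≤ k := by
  rcases Nat.eq_zero_or_pos n with rfl | hn
  · simp
  calc Real.logb 2 n ≤ Real.logb 2 (2 ^ k) :=
        Real.logb_le_logb_of_le one_lt_two (by exact_mod_cast hn) (by exact_mod_cast h)
    _ = k := by rw [Real.logb_pow, Real.logb_self_eq_one one_lt_two, mul_one]

lemma tendsto_natLog_two_atTop : Tendsto (Nat.log 2) atTop atTop :=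
  tendsto_atTop_atTop.2 fun k => ⟨2 ^ k, fun _ hn => Nat.le_log_of_pow_le one_lt_two hn⟩

def NearlyMonotoneOnDyadicBlocks (I E : ℕ → ℝ) : Prop :=
  ∀ᶠ k in atTop, ∀ n m : ℕ, 2 ^ k ≤ n → n ≤ m → m ≤ 2 ^ (k + 1) → I n ≤ I m + E k

section Dyadic

variable {I E : ℕ → ℝ}

lemma logPlus_div_logb_le_of_le_two_pow_succ {e : ℝ} {k n : ℕ} (hk : 1 ≤ k) (hkn : 2 ^ k ≤ n)
    (h : I n ≤ I (2 ^ (k + 1)) + e) :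
    logPlus (I n) / Real.logb 2 n ≤
      (1 + 1 / k) * (logPlus (I (2 ^ (k + 1))) / Real.logb 2 (2 ^ (k + 1))) + logPlus e / k := by
  have hk0 : (0 : ℝ) < k := by exact_mod_cast hk
  calc logPlus (I n) / Real.logb 2 n ≤ logPlus (I n) / k :=
        div_le_div_of_nonneg_left (logPlus_nonneg _) hk0 (natCast_le_logb_two_of_two_pow_le hkn)
    _ ≤ (logPlus (I (2 ^ (k + 1))) + logPlus e) / k := by
        gcongr
        exact (logPlus_mono h).trans (logPlus_add_le _ _)
    _ = _ := by
        rw [Real.logb_pow, Real.logb_self_eq_one one_lt_two]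
        field_simp
        push_cast
        ring

lemma logPlus_div_logb_two_pow_le {e : ℝ} {k n : ℕ} (hk : 1 ≤ k) (hkn : 2 ^ k ≤ n)
    (hnk : n ≤ 2 ^ (k + 1)) (h : I (2 ^ k) ≤ I n + e) :
    logPlus (I (2 ^ k)) / Real.logb 2 (2 ^ k) ≤
      (1 + 1 / k) * (logPlus (I n) / Real.logb 2 n) + logPlus e / k := by
  have hk0 : (0 : ℝ) < k := by exact_mod_cast hk
  have hlogn : 0 < Real.logb 2 n := hk0.trans_le (natCast_le_logb_two_of_two_pow_le hkn)
  have hL : logPlus (I n) ≤ (k + 1) * (logPlus (I n) / Real.logb 2 n) := by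
    rw [mul_div_assoc', le_div_iff₀ hlogn, mul_comm]
    gcongr
    · exact logPlus_nonneg _
    · exact_mod_cast logb_two_le_natCast_of_le_two_pow hnk
  calc logPlus (I (2 ^ k)) / Real.logb 2 (2 ^ k) ≤ (logPlus (I n) + logPlus e) / k := by
        rw [Real.logb_pow, Real.logb_self_eq_one one_lt_two, mul_one]
        gcongr
        exact (logPlus_mono h).trans (logPlus_add_le _ _)
    _ ≤ ((k + 1) * (logPlus (I n) / Real.logb 2 n) + logPlus e) / k := by gcongr
    _ = _ := by field_simp

lemma NearlyMonotoneOnDyadicBlocks.limsup_eq (hI : NearlyMonotoneOnDyadicBlocks I E)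
    (hE : Tendsto (fun k : ℕ => logPlus (E k) / k) atTop (𝓝 0)) :
    limsup (fun n : ℕ => logPlus (I n) / Real.logb 2 n) atTop =
      limsup (fun k : ℕ => logPlus (I (2 ^ k)) / Real.logb 2 (2 ^ k)) atTop := by
  refine limsup_eq_limsup_of_forall_eventually_le (fun x hx => ?_) fun x hx ε hε => ?_
  · simpa using (tendsto_pow_atTop_atTop_of_one_lt (α := ℕ) one_lt_two).eventually hx
  have hbound : ∀ᶠ n : ℕ in atTop, logPlus (I n) / Real.logb 2 n ≤
      (1 + 1 / Nat.log 2 n) * x + logPlus (E (Nat.log 2 n)) / Nat.log 2 n := by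
    filter_upwards [tendsto_natLog_two_atTop.eventually ((eventually_ge_atTop 1).and
      (hI.and ((tendsto_add_atTop_nat 1).eventually hx)))] with n ⟨hk, hIk, hxk⟩
    have hn : n ≠ 0 := by rintro rfl; simp at hk
    have hkn := Nat.pow_log_le_self 2 hn
    refine (logPlus_div_logb_le_of_le_two_pow_succ hk hkn
      (hIk _ _ hkn (Nat.lt_pow_succ_log_self one_lt_two n).le le_rfl)).trans ?_
    gcongr
  have hlim : Tendsto (fun k : ℕ => (1 + 1 / k) * x + logPlus (E k) / k) atTop (𝓝 x) := by
    simpa using ((tendsto_one_div_atTop_nhds_zero_nat.const_add 1).mul_const x).add hE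
  filter_upwards [hbound, tendsto_natLog_two_atTop.eventually
    (hlim.eventually (eventually_lt_nhds (lt_add_of_pos_right x hε)))] with n h1 h2
  exact h1.trans h2.le

lemma NearlyMonotoneOnDyadicBlocks.liminf_eq (hI : NearlyMonotoneOnDyadicBlocks I E)
    (hE : Tendsto (fun k : ℕ => logPlus (E k) / k) atTop (𝓝 0)) :
    liminf (fun n : ℕ => logPlus (I n) / Real.logb 2 n) atTop =
      liminf (fun k : ℕ => logPlus (I (2 ^ k)) / Real.logb 2 (2 ^ k)) atTop := by
  refine liminf_eq_liminf_of_forall_eventually_ge (fun x hx => ?_) fun x hx ε hε => ?_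
  · simpa using (tendsto_pow_atTop_atTop_of_one_lt (α := ℕ) one_lt_two).eventually hx
  have hbound : ∀ᶠ n : ℕ in atTop, x ≤ (1 + 1 / Nat.log 2 n) *
      (logPlus (I n) / Real.logb 2 n) + logPlus (E (Nat.log 2 n)) / Nat.log 2 n := by
    filter_upwards [tendsto_natLog_two_atTop.eventually ((eventually_ge_atTop 1).and
      (hI.and hx))] with n ⟨hk, hIk, hxk⟩
    have hn : n ≠ 0 := by rintro rfl; simp at hk
    have hkn := Nat.pow_log_le_self 2 hn
    have hnk := (Nat.lt_pow_succ_log_self one_lt_two n).le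
    exact hxk.trans (logPlus_div_logb_two_pow_le hk hkn hnk (hIk _ _ le_rfl hkn hnk))
  have hlim : Tendsto (fun k : ℕ => (x - logPlus (E k) / k) / (1 + 1 / k)) atTop (𝓝 x) := by
    have h := (hE.const_sub x).div (tendsto_one_div_atTop_nhds_zero_nat.const_add 1)
      (by norm_num)
    rwa [sub_zero, add_zero, div_one] at h
  filter_upwards [hbound, tendsto_natLog_two_atTop.eventually
    (hlim.eventually (eventually_gt_nhds (sub_lt_self x hε)))] with n h1 h2
  exact h2.le.trans ((div_le_iff₀' (by positivity)).2 (by linarith))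

end Dyadic

section NearlyNondecreasingSequence

variable {I : ℕ → ℝ} {C : ℝ}

lemma le_add_logb_sub_of_nearlyNondecreasing (hC : 0 ≤ C)
    (hI : ∀ n m : ℕ, 1 ≤ n → 1 ≤ m → I n - 4 * Real.logb 2 m - C ≤ I (n + m))
    {n m : ℕ} (hn : 1 ≤ n) (hnm : n ≤ m) : I n ≤ I m + (4 * Real.logb 2 (m - n : ℕ) + C) := by
  obtain ⟨d, rfl⟩ := Nat.exists_eq_add_of_le hnm
  rcases Nat.eq_zero_or_pos d with rfl | hd
  · simpa using hC
  · rw [Nat.add_sub_cancel_left]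
    linarith [hI n d hn hd]

lemma le_add_of_mem_dyadicBlock (hC : 0 ≤ C)
    (hI : ∀ n m : ℕ, 1 ≤ n → 1 ≤ m → I n - 4 * Real.logb 2 m - C ≤ I (n + m))
    {k n m : ℕ} (hkn : 2 ^ k ≤ n) (hnm : n ≤ m) (hmk : m ≤ 2 ^ (k + 1)) :
    I n ≤ I m + (4 * k + C) := by
  refine (le_add_logb_sub_of_nearlyNondecreasing hC hI (Nat.one_le_two_pow.trans hkn) hnm).trans ?_
  have : m - n ≤ 2 ^ k := by rw [pow_succ] at hmk; omega
  gcongr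
  exact logb_two_le_natCast_of_le_two_pow this

lemma nearlyMonotoneOnDyadicBlocks_of_nearlyNondecreasing (hC : 0 ≤ C)
    (hI : ∀ n m : ℕ, 1 ≤ n → 1 ≤ m → I n - 4 * Real.logb 2 m - C ≤ I (n + m)) :
    NearlyMonotoneOnDyadicBlocks I fun k => 4 * k + C :=
  Eventually.of_forall fun _ _ _ => le_add_of_mem_dyadicBlock hC hI

end NearlyNondecreasingSequence

section NearlyNondecreasingIntegral

variable {Ω : Type*} [MeasurableSpace Ω] {μ : Measure Ω} {F : ℕ → Ω → ℝ} {C : ℝ}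

lemma eventually_integrable_or_eventually_not_integrable [IsFiniteMeasure μ]
    (hF : ∀ n, AEStronglyMeasurable (F n) μ) (hC : 0 ≤ C)
    (hI : ∀ n m : ℕ, 1 ≤ n → 1 ≤ m → ∀ ω, F n ω - 4 * Real.logb 2 m - C ≤ F (n + m) ω) :
    (∀ᶠ n in atTop, Integrable (F n) μ) ∨ ∀ᶠ n in atTop, ¬Integrable (F n) μ := by
  refine or_iff_not_imp_right.2 fun hfreq => ?_
  simp only [not_eventually, not_not] at hfreq
  obtain ⟨n₀, hint₀, hn₀⟩ := (hfreq.and_eventually (eventually_ge_atTop 1)).exists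
  filter_upwards [eventually_ge_atTop n₀] with n hn
  obtain ⟨M, hintM, hM⟩ := (hfreq.and_eventually (eventually_ge_atTop n)).exists
  have hle {n m : ℕ} (hn : 1 ≤ n) (hnm : n ≤ m) (ω : Ω) :=
    le_add_logb_sub_of_nearlyNondecreasing (I := (F · ω)) hC (fun n m hn hm => hI n m hn hm ω)
      hn hnm
  exact integrable_of_le_of_le (hF n)
    (ae_of_all _ fun ω => sub_le_iff_le_add.2 (hle hn₀ hn ω))
    (ae_of_all _ fun ω => hle (hn₀.trans hn) hM ω)
    (hint₀.sub (integrable_const _)) (hintM.add (integrable_const _))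

lemma nearlyMonotoneOnDyadicBlocks_integral [IsProbabilityMeasure μ]
    (hF : ∀ n, AEStronglyMeasurable (F n) μ) (hC : 0 ≤ C)
    (hI : ∀ n m : ℕ, 1 ≤ n → 1 ≤ m → ∀ ω, F n ω - 4 * Real.logb 2 m - C ≤ F (n + m) ω) :
    NearlyMonotoneOnDyadicBlocks (fun n => ∫ ω, F n ω ∂μ) fun k => 4 * k + C := by
  have hdyadic {p : ℕ → Prop} (h : ∀ᶠ n in atTop, p n) : ∀ᶠ k in atTop, ∀ n, 2 ^ k ≤ n → p n :=
    (tendsto_pow_atTop_atTop_of_one_lt (α := ℕ) one_lt_two).eventually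
      (eventually_forall_ge_atTop.2 h)
  rcases eventually_integrable_or_eventually_not_integrable hF hC hI with hint | hint
  · filter_upwards [hdyadic hint] with k hk n m hkn hnm hmk
    have hm := hk m (hkn.trans hnm)
    calc ∫ ω, F n ω ∂μ ≤ ∫ ω, F m ω + (4 * k + C) ∂μ :=
          integral_mono (hk n hkn) (hm.add (integrable_const _)) fun ω =>
            le_add_of_mem_dyadicBlock (I := (F · ω)) hC (fun n m hn hm => hI n m hn hm ω)
              hkn hnm hmk
      _ = ∫ ω, F m ω ∂μ + (4 * k + C) := by
          rw [integral_add hm (integrable_const _), integral_const, probReal_univ, one_smul]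
  · filter_upwards [hdyadic hint] with k hk n m hkn hnm hmk
    rw [integral_undef (hk n hkn), integral_undef (hk m (hkn.trans hnm)), zero_add]
    positivity

end NearlyNondecreasingIntegral

lemma measurable_pmi [Countable 𝕏] [MeasurableSingletonClass 𝕏]
    (P : (n : ℕ) → (Fin n → 𝕏) → ℝ) (n : ℕ) : Measurable (pmi P n) := by
  have hblock {m : ℕ} (j : Fin m → ℤ) : Measurable fun ω : ℤ → 𝕏 => fun i => ω (j i) :=
    measurable_pi_lambda _ fun i => measurable_pi_apply _
  have hlog {m : ℕ} (j : Fin m → ℤ) : Measurable fun ω : ℤ → 𝕏 => Real.logb 2 (P m fun i => ω (j i)) :=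
    (Real.measurable_log.div_const _).comp ((measurable_of_countable (P m)).comp (hblock j))
  exact ((hlog _).neg.sub (hlog _)).add (hlog _)

theorem hilberg_exponents_dyadic_general {𝕏 : Type*} [Countable 𝕏] [MeasurableSpace 𝕏]
    [MeasurableSingletonClass 𝕏] (Q : Measure (ℤ → 𝕏)) [IsProbabilityMeasure Q]
    (P : (n : ℕ) → (Fin n → 𝕏) → ℝ)
    (hnd : NearlyNondecreasing P) :
    (∀ ω : ℤ → 𝕏, gammaPlus P ω =
      limsup (fun k : ℕ => logPlus (pmi P (2 ^ k) ω) / Real.logb 2 (2 ^ k)) atTop) ∧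
    (∀ ω : ℤ → 𝕏, gammaMinus P ω =
      liminf (fun k : ℕ => logPlus (pmi P (2 ^ k) ω) / Real.logb 2 (2 ^ k)) atTop) ∧
    deltaPlus Q P =
      limsup (fun k : ℕ => logPlus (∫ ω, pmi P (2 ^ k) ω ∂Q) / Real.logb 2 (2 ^ k)) atTop ∧
    deltaMinus Q P =
      liminf (fun k : ℕ => logPlus (∫ ω, pmi P (2 ^ k) ω ∂Q) / Real.logb 2 (2 ^ k)) atTop := by
  obtain ⟨C, hC, hP⟩ := hnd
  have hE := tendsto_logPlus_mul_add_div_atTop (by norm_num : (0 : ℝ) < 4) C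
  have hγ (ω : ℤ → 𝕏) := nearlyMonotoneOnDyadicBlocks_of_nearlyNondecreasing (I := (pmi P · ω))
    hC fun n m hn hm => hP n m hn hm ω
  have hδ := nearlyMonotoneOnDyadicBlocks_integral (μ := Q)
    (fun n => (measurable_pmi P n).aestronglyMeasurable) hC hP
  exact ⟨fun ω => (hγ ω).limsup_eq hE, fun ω => (hγ ω).liminf_eq hE, hδ.limsup_eq hE,
    hδ.liminf_eq hE⟩

/-- If `I^P` is nearly nondecreasing, then all four Hilberg exponents can
be computed along the dyadic subsequence of block lengths. -/
theorem hilberg_exponents_dyadic {𝕏 : Type*} [Countable 𝕏] [MeasurableSpace 𝕏]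
    [MeasurableSingletonClass 𝕏] (Q : Measure (ℤ → 𝕏)) [IsProbabilityMeasure Q]
    (hstat : MeasurePreserving shift Q Q)
    (P : (n : ℕ) → (Fin n → 𝕏) → ℝ) (hP1 : CodeNonneg P) (hP2 : CodeKraft P)
    (hnd : NearlyNondecreasing P) :
    (∀ ω : ℤ → 𝕏, gammaPlus P ω =
      limsup (fun k : ℕ => logPlus (pmi P (2 ^ k) ω) / Real.logb 2 (2 ^ k)) atTop) ∧
    (∀ ω : ℤ → 𝕏, gammaMinus P ω =
      liminf (fun k : ℕ => logPlus (pmi P (2 ^ k) ω) / Real.logb 2 (2 ^ k)) atTop) ∧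
    deltaPlus Q P =
      limsup (fun k : ℕ => logPlus (∫ ω, pmi P (2 ^ k) ω ∂Q) / Real.logb 2 (2 ^ k)) atTop ∧
    deltaMinus Q P =
      liminf (fun k : ℕ => logPlus (∫ ω, pmi P (2 ^ k) ω ∂Q) / Real.logb 2 (2 ^ k)) atTop :=
  hilberg_exponents_dyadic_general Q P hnd
end
end
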